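/- Let B be an invertible bounded linear operator on a complex Hilbert space H. Then ν_B > 0 if and only if ν_{B⁻¹} > 0. -/

import Mathlib

/-- The numerical range (field of values) of a bounded operator `T`:
`W(T) = { ⟨Tz, z⟩ : ‖z‖ = 1 }`, where the inner product `⟨·,·⟩` is linear in
its first argument (so `⟨Tz, z⟩` is `inner z (T z)` in Mathlib's convention). -/
def numRange {H : Type*} [NormedAddCommGroup H] [InnerProductSpace ℂ H]
    (T : H →L[ℂ] H) : Set ℂ :=
  {c | ∃ z : H, ‖z‖ = 1 ∧ c = (inner ℂ z (T z) : ℂ)}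

/-- `ν_T = inf { |λ| : λ ∈ W(T) }`. -/
noncomputable def nu {H : Type*} [NormedAddCommGroup H] [InnerProductSpace ℂ H]
    (T : H →L[ℂ] H) : ℝ :=
  sInf {x : ℝ | ∃ c ∈ numRange T, x = ‖c‖}


section NumericalRange

variable {H : Type*} [NormedAddCommGroup H] [InnerProductSpace ℂ H]

lemma nu_nonneg (T : H →L[ℂ] H) : 0 ≤ nu T :=
  Real.sInf_nonneg fun _ ⟨c, _, hx⟩ ↦ hx ▸ norm_nonneg c

lemma nu_le_norm_inner (T : H →L[ℂ] H) {z : H} (hz : ‖z‖ = 1) : nu T ≤ ‖inner ℂ z (T z)‖ :=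
  csInf_le ⟨0, fun _ ⟨c, _, hx⟩ ↦ hx ▸ norm_nonneg c⟩ ⟨_, ⟨z, hz, rfl⟩, rfl⟩

lemma le_nu [Nontrivial H] (T : H →L[ℂ] H) {a : ℝ}
    (h : ∀ z : H, ‖z‖ = 1 → a ≤ ‖inner ℂ z (T z)‖) : a ≤ nu T := by
  obtain ⟨z, hz⟩ := exists_norm_eq H zero_le_one
  exact le_csInf ⟨_, ⟨_, ⟨z, hz, rfl⟩, rfl⟩⟩ fun _ ⟨_, ⟨z, hz, hc⟩, hx⟩ ↦ hx ▸ hc ▸ h z hz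

lemma nontrivial_of_nu_pos {T : H →L[ℂ] H} (h : 0 < nu T) : Nontrivial H := by
  by_contra hH
  rw [not_nontrivial_iff_subsingleton] at hH
  have hempty : {x : ℝ | ∃ c ∈ numRange T, x = ‖c‖} = ∅ :=
    Set.eq_empty_of_forall_notMem fun _ ⟨_, ⟨z, hz, _⟩, _⟩ ↦ by simp [Subsingleton.elim z 0] at hz
  exact h.ne' (by rw [nu, hempty, Real.sInf_empty])

lemma nu_mul_norm_sq_le_norm_inner (T : H →L[ℂ] H) (u : H) :
    nu T * ‖u‖ ^ 2 ≤ ‖inner ℂ u (T u)‖ := by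
  rcases eq_or_ne u 0 with rfl | hu
  · simp
  have hu' : 0 < ‖u‖ := norm_pos_iff.mpr hu
  set z := (‖u‖⁻¹ : ℂ) • u
  have hz : ‖z‖ = 1 := by simp [z, norm_smul, hu'.ne']
  have hinner : inner ℂ u (T u) = (‖u‖ ^ 2 : ℂ) * inner ℂ z (T z) := by
    simp only [z, map_smul, inner_smul_left, inner_smul_right, map_inv₀, Complex.conj_ofReal]
    have : (‖u‖ : ℂ) ≠ 0 := by exact_mod_cast hu'.ne'
    field_simp
  calc nu T * ‖u‖ ^ 2 ≤ ‖inner ℂ z (T z)‖ * ‖u‖ ^ 2 := by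
        gcongr; exact nu_le_norm_inner T hz
    _ = ‖inner ℂ u (T u)‖ := by
        rw [hinner, norm_mul, mul_comm]; norm_cast; rw [norm_pow, norm_norm]

/-- For a unit vector `w = B u`: `|⟨B⁻¹w, w⟩| = |⟨Bu, u⟩| ≥ ν_B ‖u‖²` and `‖u‖ ≥ 1 / ‖B‖`. -/
lemma nu_div_norm_sq_le_nu_symm [Nontrivial H] (B : H ≃L[ℂ] H) :
    nu (B : H →L[ℂ] H) / ‖(B : H →L[ℂ] H)‖ ^ 2 ≤ nu (B.symm : H →L[ℂ] H) := by
  refine le_nu _ fun w hw ↦ ?_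
  set u := B.symm w
  have hwu : w = B u := (B.apply_symm_apply w).symm
  have hBu : 1 ≤ ‖(B : H →L[ℂ] H)‖ * ‖u‖ := hw ▸ hwu ▸ (B : H →L[ℂ] H).le_opNorm u
  have hB : 0 < ‖(B : H →L[ℂ] H)‖ := B.norm_pos
  calc nu (B : H →L[ℂ] H) / ‖(B : H →L[ℂ] H)‖ ^ 2
      ≤ nu (B : H →L[ℂ] H) * ‖u‖ ^ 2 := by
        rw [div_le_iff₀ (by positivity)]
        have : 1 ≤ (‖(B : H →L[ℂ] H)‖ * ‖u‖) ^ 2 := one_le_pow₀ hBu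
        nlinarith [nu_nonneg (B : H →L[ℂ] H)]
    _ ≤ ‖inner ℂ u (B u)‖ := nu_mul_norm_sq_le_norm_inner (B : H →L[ℂ] H) u
    _ = ‖inner ℂ w (B.symm w)‖ := by rw [norm_inner_symm, ← hwu]

lemma nu_symm_pos_of_nu_pos (B : H ≃L[ℂ] H) (h : 0 < nu (B : H →L[ℂ] H)) :
    0 < nu (B.symm : H →L[ℂ] H) := by
  have := nontrivial_of_nu_pos h
  exact (div_pos h (pow_pos B.norm_pos 2)).trans_le (nu_div_norm_sq_le_nu_symm B)

end NumericalRange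

theorem nu_pos_iff_nu_inv_pos_general
    {H : Type*} [NormedAddCommGroup H] [InnerProductSpace ℂ H]
    (B : H ≃L[ℂ] H) :
    0 < nu (B : H →L[ℂ] H) ↔ 0 < nu (B.symm : H →L[ℂ] H) :=
  ⟨nu_symm_pos_of_nu_pos B, fun h ↦ by simpa using nu_symm_pos_of_nu_pos B.symm h⟩

/-- Proposition 3.1, equivalence (L2) ⇔ (L3): `ν_B > 0` iff `ν_{B⁻¹} > 0`. -/
theorem nu_pos_iff_nu_inv_pos
    {H : Type*} [NormedAddCommGroup H] [InnerProductSpace ℂ H] [CompleteSpace H]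
    (B : H ≃L[ℂ] H) :
    0 < nu (B : H →L[ℂ] H) ↔ 0 < nu (B.symm : H →L[ℂ] H) :=
  nu_pos_iff_nu_inv_pos_general B
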